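/- The k-symmetrical finite automaton A associated to a k-word set F_k recognizes exactly the k-strictly-locally-testable language Loc(F_k), and A is unambiguous: every word of L(A) has exactly one accepting run. -/

import Mathlib

/-!
The `k`-symmetrical finite automaton associated to a `k`-word set `F_k`
(Definition 5 of "Higher-order Operator Precedence languages"), its language
(the `k`-strictly-locally-testable language `Loc(F_k)`) and its unambiguity.

A state is a pair `(β, α)` of `(k-1)`-words (look-back, look-ahead), both
factors of words of `F`.  A transition `(β, α) →ᵃ (β', α')` requires
`β' = t_{k-1}(βa)`, `α = i_{k-1}(aα')`, and consistency with `F` of the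
`k`-windows `βa` and `aα'`; the initial state has look-back `#^(k-1)` and all
`k`-windows of `β·α` in `F` (covering the words shorter than `k`), and the
final state has look-ahead `#^(k-1)`.
-/

namespace HOP

/-- `Loc(F_k)` with end-words `⍟ ∈ #⁺` of length `k-1`. -/
def LocRaw {υ : Type} (hash : υ) (k : ℕ) (F : Set (List υ)) : Set (List υ) :=
  {x | ∀ u : List υ, u.length = k →
    u <:+: (List.replicate (k - 1) hash ++ x ++ List.replicate (k - 1) hash) →
    u ∈ F}

/-- Length-`j` factors of words of `F`. -/
def fac {υ : Type} (j : ℕ) (F : Set (List υ)) : Set (List υ) :=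
  {u | u.length = j ∧ ∃ w ∈ F, u <:+: w}

/-- A valid state of the symmetrical automaton: both components are
`(k-1)`-factors of `F`-words. -/
def ValidState {υ : Type} (k : ℕ) (F : Set (List υ)) (p : List υ × List υ) : Prop :=
  p.1 ∈ fac (k - 1) F ∧ p.2 ∈ fac (k - 1) F

/-- The transition relation of the symmetrical automaton. -/
def SymTrans {υ : Type} (k : ℕ) (F : Set (List υ))
    (p : List υ × List υ) (a : υ) (q : List υ × List υ) : Prop :=
  ValidState k F p ∧ ValidState k F q ∧
  q.1 = (p.1 ++ [a]).drop 1 ∧ p.2 = (a :: q.2).take (k - 1) ∧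
  (p.1 ++ [a]) ∈ F ∧ (a :: q.2) ∈ F

/-- A run of a (labelled) transition system, recording the sequence of states
visited after the start state. -/
inductive RunL {S υ : Type} (δ : S → υ → S → Prop) : S → List υ → List S → Prop
  | nil (s : S) : RunL δ s [] []
  | cons {s s' : S} (a : υ) {x : List υ} {qs : List S} :
      δ s a s' → RunL δ s' x qs → RunL δ s (a :: x) (s' :: qs)

/-- An accepting run of the symmetrical automaton on `x`, starting in the
initial state `p` and visiting the states `qs`. -/
def AcceptRun {υ : Type} (hash : υ) (k : ℕ) (F : Set (List υ))
    (x : List υ) (p : List υ × List υ) (qs : List (List υ × List υ)) : Prop :=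
  p.1 = List.replicate (k - 1) hash ∧ ValidState k F p ∧
  (∀ u : List υ, u.length = k → u <:+: (p.1 ++ p.2) → u ∈ F) ∧
  RunL (SymTrans k F) p x qs ∧
  (∃ qf, (p :: qs).getLast? = some qf ∧ qf.2 = List.replicate (k - 1) hash)

end HOP

/-!
A run on `x` is forced: having read `y` with `z` still to read, it must be in the state
`(t_{k-1}(⍟y), i_{k-1}(z⍟))`, since transitions determine look-backs forwards and look-aheads
backwards; this is unambiguity. Along an accepting run the transitions test the windows `βa`,
while the property "all windows of `β·α` lie in `F`" passes from each state to the next; at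
the final state it covers the windows of `⍟x⍟` that the windows `βa` miss. Conversely, for
`x ∈ Loc(F_k)` the forced states are valid and linked by transitions.
-/

theorem List.IsInfix.prefix_or_infix_tail {α : Type*} {u w : List α} (h : u <:+: w) :
    u <+: w ∨ u <:+: w.tail := by
  cases w with
  | nil => exact Or.inl (List.eq_nil_of_infix_nil h ▸ List.nil_prefix)
  | cons a w => exact List.infix_cons_iff.mp h

theorem List.IsInfix.exists_infix_length_succ {α : Type*} {u w : List α} (h : u <:+: w)
    (hlt : u.length < w.length) : ∃ v, v.length = u.length + 1 ∧ u <:+: v ∧ v <:+: w := by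
  obtain ⟨s, t, rfl⟩ := h
  rcases t with _ | ⟨c, t⟩
  · rcases s.eq_nil_or_concat with rfl | ⟨s, b, rfl⟩
    · simp at hlt
    · exact ⟨b :: u, by simp, ⟨[b], [], by simp⟩, ⟨s, [], by simp⟩⟩
  · exact ⟨u ++ [c], by simp, ⟨[], [c], by simp⟩, ⟨s, t, by simp⟩⟩

theorem List.drop_append_suffix {α : Type*} (n : ℕ) (l m : List α) :
    l.drop n ++ m <:+ l ++ m :=
  ⟨l.take n, by rw [← List.append_assoc, List.take_append_drop]⟩

theorem List.exists_getLast?_cons_eq_some_and_iff {α : Type*} {P : α → Prop} (a : α)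
    (l : List α) :
    (∃ b, (a :: l).getLast? = some b ∧ P b) ↔ P ((a :: l).getLast (List.cons_ne_nil a l)) := by
  simp [List.getLast?_eq_some_getLast (List.cons_ne_nil a l)]

namespace HOP

variable {υ : Type} {k : ℕ} {F : Set (List υ)}

def FactorsIn (k : ℕ) (F : Set (List υ)) (w : List υ) : Prop :=
  ∀ u : List υ, u.length = k → u <:+: w → u ∈ F

theorem FactorsIn.of_infix {v w : List υ} (h : FactorsIn k F w) (hvw : v <:+: w) :
    FactorsIn k F v :=
  fun u hu huv => h u hu (huv.trans hvw)

theorem FactorsIn.mem_fac {w u : List υ} (h : FactorsIn k F w) (hk : 0 < k)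
    (hw : k ≤ w.length) (hu : u.length = k - 1) (huw : u <:+: w) : u ∈ fac (k - 1) F := by
  obtain ⟨v, hv, huv, hvw⟩ := huw.exists_infix_length_succ (by omega)
  exact ⟨hu, v, h v (by omega) hvw, huv⟩

theorem FactorsIn.drop_one {β x e : List υ} {a : υ} (h : FactorsIn k F (β ++ a :: x ++ e)) :
    FactorsIn k F ((β ++ [a]).drop 1 ++ x ++ e) :=
  h.of_infix (by simpa using (List.drop_append_suffix 1 (β ++ [a]) (x ++ e)).isInfix)

theorem SymTrans.factorsIn (hk : 0 < k) {p q : List υ × List υ} {a : υ}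
    (tr : SymTrans k F p a q) (hp : FactorsIn k F (p.1 ++ p.2)) :
    FactorsIn k F (q.1 ++ q.2) := by
  obtain ⟨-, ⟨-, hq2, -⟩, hq1, hp2, -, haq⟩ := tr
  obtain ⟨z, hz⟩ : ∃ z, a :: q.2 = p.2 ++ [z] := by
    obtain ⟨l, z, hl⟩ := ((a :: q.2).eq_nil_or_concat).resolve_left (List.cons_ne_nil _ _)
    rw [List.concat_eq_append] at hl
    have hlen : l.length = k - 1 := by
      have := congrArg List.length hl
      simp [hq2] at this
      omega
    exact ⟨z, by rw [hp2, hl, List.take_left' hlen]⟩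
  -- `q.1 ++ q.2` is a factor of `p.1 ++ p.2 ++ [z]`, whose only window beyond those of
  -- `p.1 ++ p.2` is its suffix `a :: q.2`.
  intro u hu huq
  have huw : u <:+: (p.1 ++ p.2) ++ [z] := by
    rw [List.append_assoc, ← hz]
    refine huq.trans (List.IsSuffix.isInfix ?_)
    simpa [hq1] using List.drop_append_suffix 1 (p.1 ++ [a]) q.2
  rcases List.infix_concat_iff.mp huw with hsuf | hinf
  · rw [List.append_assoc, ← hz] at hsuf
    have hlen : u.length = (a :: q.2).length := by simp [hu, hq2]; omega
    rw [(List.suffix_of_suffix_length_le hsuf (List.suffix_append _ _) hlen.le).eq_of_length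
      hlen]
    exact haq
  · exact hp u hu hinf

theorem RunL.factorsIn_of_final (hash : υ) (hk : 0 < k) {p : List υ × List υ} {x : List υ}
    {qs : List (List υ × List υ)} (hr : RunL (SymTrans k F) p x qs)
    (hp : FactorsIn k F (p.1 ++ p.2))
    (hfin : ((p :: qs).getLast (List.cons_ne_nil _ _)).2 = List.replicate (k - 1) hash) :
    FactorsIn k F (p.1 ++ x ++ List.replicate (k - 1) hash) := by
  induction hr with
  | nil s => simpa [← hfin] using hp
  | @cons s s' a y qs tr hrest ih =>
    have hW := ih (tr.factorsIn hk hp) (by simpa using hfin)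
    obtain ⟨⟨⟨hs1, -⟩, -⟩, -, hs'1, -, hsa, -⟩ := tr
    intro u hu huw
    rcases huw.prefix_or_infix_tail with hpre | htl
    · have hlen : u.length = (s.1 ++ [a]).length := by simp [hu, hs1]; omega
      have hsa_pre : s.1 ++ [a] <+: s.1 ++ a :: y ++ List.replicate (k - 1) hash :=
        ⟨y ++ List.replicate (k - 1) hash, by simp⟩
      rw [(List.prefix_of_prefix_length_le hpre hsa_pre hlen.le).eq_of_length hlen]
      exact hsa
    · refine hW u hu ?_
      rw [hs'1, List.drop_one, List.append_assoc, ← List.tail_append_of_ne_nil (by simp)]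
      simpa using htl

/-- The only state a run can be in with look-back `β` when `x` remains to be read. -/
def contextState (hash : υ) (k : ℕ) (β x : List υ) : List υ × List υ :=
  (β, (x ++ List.replicate (k - 1) hash).take (k - 1))

theorem factorsIn_contextState (hash : υ) {β x : List υ}
    (h : FactorsIn k F (β ++ x ++ List.replicate (k - 1) hash)) :
    FactorsIn k F ((contextState hash k β x).1 ++ (contextState hash k β x).2) := by
  refine h.of_infix (List.IsPrefix.isInfix ?_)
  rw [List.append_assoc]
  exact (List.prefix_append_right_inj β).2 (List.take_prefix _ _)

theorem validState_contextState (hash : υ) (hk : 2 ≤ k) {β x : List υ}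
    (hβ : β.length = k - 1) (h : FactorsIn k F (β ++ x ++ List.replicate (k - 1) hash)) :
    ValidState k F (contextState hash k β x) := by
  have hlen : k ≤ (β ++ x ++ List.replicate (k - 1) hash).length := by simp; omega
  unfold contextState
  refine ⟨h.mem_fac (by omega) hlen hβ ⟨[], x ++ List.replicate (k - 1) hash, by simp⟩,
    h.mem_fac (by omega) hlen (by simp) ?_⟩
  exact (List.take_prefix _ _).isInfix.trans ⟨β, [], by simp⟩

theorem symTrans_contextState (hash : υ) (hk : 2 ≤ k) {β x : List υ} {a : υ}
    (hβ : β.length = k - 1) (h : FactorsIn k F (β ++ a :: x ++ List.replicate (k - 1) hash)) :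
    SymTrans k F (contextState hash k β (a :: x)) a
      (contextState hash k ((β ++ [a]).drop 1) x) := by
  refine ⟨validState_contextState hash hk hβ h,
    validState_contextState hash hk (by simp [hβ]) h.drop_one, rfl, ?_, ?_, ?_⟩
  · simp only [contextState, List.cons_append]
    rw [← List.take_succ_cons, List.take_take, min_eq_left (by omega)]
  · exact h _ (by simp [contextState, hβ]; omega)
      ⟨[], x ++ List.replicate (k - 1) hash, by simp [contextState]⟩
  · refine h _ (by simp [contextState]; omega)
      ((List.IsPrefix.isInfix (l₂ := a :: (x ++ List.replicate (k - 1) hash)) ?_).trans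
        ⟨β, [], by simp⟩)
    simp only [contextState]
    rw [← List.take_succ_cons]
    exact List.take_prefix _ _

theorem exists_run_contextState (hash : υ) (hk : 2 ≤ k) (x : List υ) {β : List υ}
    (hβ : β.length = k - 1) (h : FactorsIn k F (β ++ x ++ List.replicate (k - 1) hash)) :
    ∃ qs, RunL (SymTrans k F) (contextState hash k β x) x qs ∧
      ((contextState hash k β x :: qs).getLast (List.cons_ne_nil _ _)).2 =
        List.replicate (k - 1) hash := by
  induction x generalizing β with
  | nil => exact ⟨[], RunL.nil _, by simp [contextState]⟩
  | cons a x ih =>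
    obtain ⟨qs, hrun, hfin⟩ := ih (by simp [hβ]) h.drop_one
    exact ⟨_ :: qs, RunL.cons a (symTrans_contextState hash hk hβ h) hrun, by simpa using hfin⟩

theorem RunL.symTrans_unique {p p' : List υ × List υ} {x : List υ}
    {qs qs' : List (List υ × List υ)} (hr : RunL (SymTrans k F) p x qs)
    (hr' : RunL (SymTrans k F) p' x qs') (h1 : p.1 = p'.1)
    (h2 : ((p :: qs).getLast (List.cons_ne_nil _ _)).2 =
      ((p' :: qs').getLast (List.cons_ne_nil _ _)).2) :
    p = p' ∧ qs = qs' := by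
  induction hr generalizing p' qs' with
  | nil s =>
    cases hr'
    exact ⟨Prod.ext h1 (by simpa using h2), rfl⟩
  | cons a tr hrest ih =>
    rcases hr' with _ | ⟨_, tr', hrest'⟩
    obtain ⟨rfl, rfl⟩ := ih hrest' (by rw [tr.2.2.1, tr'.2.2.1, h1]) (by simpa using h2)
    exact ⟨Prod.ext h1 (tr.2.2.2.1.trans tr'.2.2.2.1.symm), rfl⟩

theorem symAut_correct_and_unambiguous_general {υ : Type} (hash : υ) (k : ℕ)
    (hk : 2 ≤ k) (F : Set (List υ)) :
    (∀ x : List υ, (∃ p qs, AcceptRun hash k F x p qs) ↔ x ∈ LocRaw hash k F) ∧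
    (∀ x p qs p' qs', AcceptRun hash k F x p qs → AcceptRun hash k F x p' qs' →
      p = p' ∧ qs = qs') := by
  simp only [AcceptRun, List.exists_getLast?_cons_eq_some_and_iff]
  refine ⟨fun x => ⟨?_, fun hx => ?_⟩, ?_⟩
  · rintro ⟨p, qs, hp1, -, hp, hrun, hfin⟩
    have h := hrun.factorsIn_of_final hash (by omega) hp hfin
    rwa [hp1] at h
  · obtain ⟨qs, hrun, hfin⟩ := exists_run_contextState hash hk x List.length_replicate hx
    exact ⟨_, qs, rfl, validState_contextState hash hk List.length_replicate hx,
      factorsIn_contextState hash hx, hrun, hfin⟩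
  · rintro x p qs p' qs' ⟨hp1, -, -, hrun, hfin⟩ ⟨hp1', -, -, hrun', hfin'⟩
    exact hrun.symTrans_unique hrun' (hp1.trans hp1'.symm) (hfin.trans hfin'.symm)

/-- **Properties of the symmetrical automaton** (Section 4): it recognizes
exactly `Loc(F_k)`, and it is unambiguous: every recognized word has exactly
one accepting run. -/
theorem symAut_correct_and_unambiguous {υ : Type} (hash : υ) (k : ℕ)
    (hk : 2 ≤ k) (F : Set (List υ)) (hF : ∀ u ∈ F, u.length = k) :
    (∀ x : List υ, (∃ p qs, AcceptRun hash k F x p qs) ↔ x ∈ LocRaw hash k F) ∧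
    (∀ x p qs p' qs', AcceptRun hash k F x p qs → AcceptRun hash k F x p' qs' →
      p = p' ∧ qs = qs') :=
  symAut_correct_and_unambiguous_general hash k hk F

end HOP
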